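/- The counting encoding is correct for chains: interpreting the fact c_sg(c, I) as the goal sg(c, B₁) ∧ parent(B₂,B₁) ∧ ... ∧ parent(B_{I+1}, B_I) ∧ answer(B_{I+1}), the one-step transition using the recursive same-generation rule sg(A,B) ← parent(A,A') ∧ sg(A',B') ∧ parent(B,B') together with a fact parent(c, c') transforms the goal encoded by c_sg(c, I) into the goal encoded by c_sg(c', I+1); i.e., the rule c_sg(C', I+1) ← c_sg(C, I) ∧ parent(C, C') simulates two SLD steps (one rule-step, one fact-step) on the encoded goals. -/

import Mathlib

/-!
After the rule step with fresh variables `A' = V_{I+2}`, `B' = V_{I+3}` and the fact step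
binding `A'` to `c'`, the goal is (with `B_k = V_k` as in `enc c I`)
`sg(c', B') ∧ parent(B₁, B') ∧ parent(B₂, B₁) ∧ … ∧ parent(B_{I+1}, B_I) ∧ answer(B_{I+1})`.
This is the image of `enc c' (I+1)` under the renaming `V₁ ↦ B'`, `V_{k+1} ↦ B_k`, which is
injective on its variables. Normalization is invariant under such renamings: the list of first
occurrences is transported along the renaming, and so are the positions in it.
-/

namespace Counting13

/-- Terms: constants and (normalized) variables. -/
inductive Tm where
  | const : ℕ → Tm
  | var : ℕ → Tm
deriving DecidableEq

/-- Atoms over the predicates `sg`, `parent`, `person`, `answer`. -/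
inductive Atm where
  | sg : Tm → Tm → Atm
  | parent : Tm → Tm → Atm
  | person : Tm → Atm
  | ans : Tm → Atm
deriving DecidableEq

abbrev Goal := List Atm

def tmVars : Tm → List ℕ
  | .const _ => []
  | .var i => [i]

def atmVars : Atm → List ℕ
  | .sg s t => tmVars s ++ tmVars t
  | .parent s t => tmVars s ++ tmVars t
  | .person t => tmVars t
  | .ans t => tmVars t

def goalVars : Goal → List ℕ
  | [] => []
  | a :: g => atmVars a ++ goalVars g

def firstOccs (l : List ℕ) : List ℕ :=
  l.foldl (fun acc x => if x ∈ acc then acc else acc ++ [x]) []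

def renTm (m : List ℕ) : Tm → Tm
  | .const c => .const c
  | .var i => .var (m.idxOf i + 1)

def renAtm (m : List ℕ) : Atm → Atm
  | .sg s t => .sg (renTm m s) (renTm m t)
  | .parent s t => .parent (renTm m s) (renTm m t)
  | .person t => .person (renTm m t)
  | .ans t => .ans (renTm m t)

/-- Normalization: rename variables to `V₁, V₂, ...` in order of first
occurrence; two goals are variants iff they have the same normalization. -/
def normGoal (g : Goal) : Goal := g.map (renAtm (firstOccs (goalVars g)))

def substTm (x : ℕ) (u : Tm) : Tm → Tm
  | .const c => .const c
  | .var i => if i = x then u else .var i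

def substAtm (x : ℕ) (u : Tm) : Atm → Atm
  | .sg s t => .sg (substTm x u s) (substTm x u t)
  | .parent s t => .parent (substTm x u s) (substTm x u t)
  | .person t => .person (substTm x u t)
  | .ans t => .ans (substTm x u t)

def substGoal (x : ℕ) (u : Tm) (g : Goal) : Goal := g.map (substAtm x u)

/-- One SLD step (first-literal selection) with the recursive rule
`sg(A,B) ← parent(A,A') ∧ sg(A',B') ∧ parent(B,B')`, with fresh distinct
variables `a, b` for `A', B'`. -/
inductive recStep : Goal → Goal → Prop
  | mk (s t : Tm) (R : Goal) (a b : ℕ)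
      (ha : a ∉ goalVars (.sg s t :: R)) (hb : b ∉ goalVars (.sg s t :: R))
      (hab : a ≠ b) :
      recStep (.sg s t :: R)
        (.parent s (.var a) :: .sg (.var a) (.var b) :: .parent t (.var b) :: R)

/-- One SLD step with the database fact `parent(c,c')`: the leading literal
`parent(c,X)` is removed and `X` is bound to `c'` in the rest of the goal. -/
inductive factStep (c c' : ℕ) : Goal → Goal → Prop
  | mk (x : ℕ) (R : Goal) :
      factStep c c' (.parent (.const c) (.var x) :: R)
        (substGoal x (.const c') R)

/-- The goal encoded by the counting fact `c_sg(c, I)`: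
`sg(c,B₁) ∧ parent(B₂,B₁) ∧ ... ∧ parent(B_{I+1},B_I) ∧ answer(B_{I+1})`. -/
def enc (c I : ℕ) : Goal :=
  Atm.sg (.const c) (.var 1) ::
    ((List.range I).map (fun i => Atm.parent (.var (i + 2)) (.var (i + 1))) ++
      [Atm.ans (.var (I + 1))])

lemma goalVars_eq_flatMap (g : Goal) : goalVars g = g.flatMap atmVars := by
  induction g with
  | nil => rfl
  | cons a g ih => rw [goalVars, ih, List.flatMap_cons]

def renameTm (f : ℕ → ℕ) : Tm → Tm
  | .const c => .const c
  | .var i => .var (f i)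

def renameAtm (f : ℕ → ℕ) : Atm → Atm
  | .sg s t => .sg (renameTm f s) (renameTm f t)
  | .parent s t => .parent (renameTm f s) (renameTm f t)
  | .person t => .person (renameTm f t)
  | .ans t => .ans (renameTm f t)

def renameGoal (f : ℕ → ℕ) (g : Goal) : Goal := g.map (renameAtm f)

lemma renAtm_eq_renameAtm (m : List ℕ) : renAtm m = renameAtm (fun i => m.idxOf i + 1) := by
  funext a
  rcases a with ⟨s | s, t | t⟩ | ⟨s | s, t | t⟩ | (t | t) | (t | t) <;> rfl

lemma renameAtm_renameAtm (f f' : ℕ → ℕ) (a : Atm) :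
    renameAtm f (renameAtm f' a) = renameAtm (f ∘ f') a := by
  rcases a with ⟨s | s, t | t⟩ | ⟨s | s, t | t⟩ | (t | t) | (t | t) <;> rfl

lemma renameAtm_congr {f f' : ℕ → ℕ} {a : Atm} (h : ∀ x ∈ atmVars a, f x = f' x) :
    renameAtm f a = renameAtm f' a := by
  rcases a with ⟨s | s, t | t⟩ | ⟨s | s, t | t⟩ | (t | t) | (t | t) <;>
    simp_all [renameAtm, renameTm, atmVars, tmVars]

lemma atmVars_renameAtm (f : ℕ → ℕ) (a : Atm) :
    atmVars (renameAtm f a) = (atmVars a).map f := by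
  rcases a with ⟨s | s, t | t⟩ | ⟨s | s, t | t⟩ | (t | t) | (t | t) <;> rfl

lemma goalVars_renameGoal (f : ℕ → ℕ) (g : Goal) :
    goalVars (renameGoal f g) = (goalVars g).map f := by
  simp only [goalVars_eq_flatMap, renameGoal, List.flatMap_map, atmVars_renameAtm,
    List.map_flatMap]

def firstOccsFrom (acc l : List ℕ) : List ℕ :=
  l.foldl (fun acc x => if x ∈ acc then acc else acc ++ [x]) acc

lemma firstOccsFrom_map {f : ℕ → ℕ} {acc l : List ℕ}
    (hf : Set.InjOn f {x | x ∈ acc ++ l}) :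
    firstOccsFrom (acc.map f) (l.map f) = (firstOccsFrom acc l).map f := by
  induction l generalizing acc with
  | nil => rfl
  | cons y l ih =>
    have hy : f y ∈ acc.map f ↔ y ∈ acc := by
      refine ⟨fun h => ?_, List.mem_map_of_mem⟩
      obtain ⟨z, hz, hzy⟩ := List.mem_map.1 h
      exact hf (by simp [hz]) (by simp) hzy ▸ hz
    have hf' : ∀ acc', {x | x ∈ acc' ++ l} ⊆ {x | x ∈ acc ++ y :: l} →
        Set.InjOn f {x | x ∈ acc' ++ l} := fun _ => hf.mono
    by_cases hmem : y ∈ acc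
    · simp only [firstOccsFrom, List.map_cons, List.foldl_cons, hy, if_pos hmem] at ih ⊢
      exact ih (hf' acc fun x hx => by
        simp only [Set.mem_ofPred_eq, List.mem_append, List.mem_cons] at hx ⊢; tauto)
    · simp only [firstOccsFrom, List.map_cons, List.foldl_cons, hy, if_neg hmem] at ih ⊢
      rw [← List.map_singleton, ← List.map_append]
      exact ih (hf' _ fun x hx => by
        simp only [Set.mem_ofPred_eq, List.mem_append, List.mem_cons] at hx ⊢; tauto)

lemma firstOccs_map {f : ℕ → ℕ} {l : List ℕ} (hf : Set.InjOn f {x | x ∈ l}) :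
    firstOccs (l.map f) = (firstOccs l).map f :=
  firstOccsFrom_map (acc := []) (by simpa using hf)

lemma mem_of_mem_firstOccsFrom {x : ℕ} {acc l : List ℕ} (h : x ∈ firstOccsFrom acc l) :
    x ∈ acc ∨ x ∈ l := by
  induction l generalizing acc with
  | nil => exact Or.inl h
  | cons y l ih =>
    rcases ih h with h | h
    · dsimp only at h
      split_ifs at h <;> simp only [List.mem_append, List.mem_cons] at h ⊢ <;> tauto
    · simp [h]

lemma mem_of_mem_firstOccs {x : ℕ} {l : List ℕ} (h : x ∈ firstOccs l) : x ∈ l :=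
  (mem_of_mem_firstOccsFrom h).resolve_left List.not_mem_nil

lemma idxOf_map_of_injOn {f : ℕ → ℕ} {x : ℕ} {m : List ℕ}
    (hf : Set.InjOn f {y | y ∈ x :: m}) :
    (m.map f).idxOf (f x) = m.idxOf x := by
  induction m with
  | nil => rfl
  | cons y m ih =>
    by_cases hxy : y = x
    · simp [hxy, List.idxOf_cons_self]
    · have hfxy : f y ≠ f x := fun h => hxy (hf (by simp) (by simp) h)
      rw [List.map_cons, List.idxOf_cons_ne _ hfxy, List.idxOf_cons_ne _ hxy,
        ih (hf.mono fun z hz => by simp only [Set.mem_ofPred_eq, List.mem_cons] at hz ⊢; tauto)]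

theorem normGoal_renameGoal {f : ℕ → ℕ} {g : Goal} (hf : Set.InjOn f {x | x ∈ goalVars g}) :
    normGoal (renameGoal f g) = normGoal g := by
  have hsub : ∀ x ∈ firstOccs (goalVars g), x ∈ goalVars g := fun _ => mem_of_mem_firstOccs
  rw [normGoal, normGoal, goalVars_renameGoal, firstOccs_map hf]
  simp only [renameGoal, List.map_map, renAtm_eq_renameAtm]
  refine List.map_congr_left fun a ha => ?_
  rw [Function.comp_apply, renameAtm_renameAtm]
  refine renameAtm_congr fun x hx => ?_
  have hxg : x ∈ goalVars g := by
    rw [goalVars_eq_flatMap]; exact List.mem_flatMap.2 ⟨a, ha, hx⟩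
  have hinj : Set.InjOn f {y | y ∈ x :: firstOccs (goalVars g)} :=
    hf.mono fun y hy => (List.mem_cons.1 hy).elim (· ▸ hxg) (hsub y)
  simp only [Function.comp_apply, idxOf_map_of_injOn hinj]

lemma substGoal_of_not_mem {x : ℕ} {g : Goal} (u : Tm) (hx : x ∉ goalVars g) :
    substGoal x u g = g := by
  rw [goalVars_eq_flatMap, List.mem_flatMap, not_exists] at hx
  conv_rhs => rw [← List.map_id g]
  refine List.map_congr_left fun a ha => ?_
  have hxa := fun h => hx a ⟨ha, h⟩
  rcases a with ⟨s | s, t | t⟩ | ⟨s | s, t | t⟩ | (t | t) | (t | t) <;>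
    simp_all [substAtm, substTm, atmVars, tmVars, eq_comm]

def encTail (I : ℕ) : Goal :=
  (List.range I).map (fun i => Atm.parent (.var (i + 2)) (.var (i + 1))) ++
    [Atm.ans (.var (I + 1))]

lemma enc_eq_cons (c I : ℕ) : enc c I = Atm.sg (.const c) (.var 1) :: encTail I := rfl

lemma mem_goalVars_encTail {I x : ℕ} (hx : x ∈ goalVars (encTail I)) :
    1 ≤ x ∧ x ≤ I + 1 := by
  simp only [encTail, goalVars_eq_flatMap, List.flatMap_append, List.flatMap_map, List.mem_append,
    List.mem_flatMap, List.mem_range, atmVars, tmVars] at hx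
  grind

lemma mem_goalVars_enc {c I x : ℕ} (hx : x ∈ goalVars (enc c I)) : 1 ≤ x ∧ x ≤ I + 1 := by
  rw [enc_eq_cons, goalVars] at hx
  rcases List.mem_append.1 hx with hx | hx
  · simp_all [atmVars, tmVars]
  · exact mem_goalVars_encTail hx

def stepRenaming (I i : ℕ) : ℕ := if i = 1 then I + 3 else i - 1

lemma injOn_stepRenaming (c' I : ℕ) :
    Set.InjOn (stepRenaming I) {x | x ∈ goalVars (enc c' (I + 1))} := fun x hx y hy hxy => by
  have := mem_goalVars_enc hx
  have := mem_goalVars_enc hy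
  unfold stepRenaming at hxy
  split_ifs at hxy <;> omega

lemma renameGoal_stepRenaming_enc (c' I : ℕ) :
    renameGoal (stepRenaming I) (enc c' (I + 1)) =
      Atm.sg (.const c') (.var (I + 3)) :: Atm.parent (.var 1) (.var (I + 3)) :: encTail I := by
  simp [renameGoal, enc, encTail, renameAtm, renameTm, stepRenaming, List.range_succ_eq_map]

/-- the counting rule `c_sg(C',I+1) ← c_sg(C,I) ∧ parent(C,C')`
simulates two SLD steps on the encoded goals: one step with the recursive
same-generation rule on `enc c I`, followed by one step with the fact
`parent(c,c')`, yields a variant (same normalization) of `enc c' (I+1)`. -/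
theorem counting_encoding_correct (c c' I : ℕ) :
    ∃ g₁ g₂ : Goal, recStep (enc c I) g₁ ∧ factStep c c' g₁ g₂ ∧
      normGoal g₂ = normGoal (enc c' (I + 1)) := by
  have hfresh : ∀ x ∈ goalVars (enc c I), x < I + 2 := fun x hx => by
    have := mem_goalVars_enc hx; omega
  refine ⟨_, _, recStep.mk (.const c) (.var 1) (encTail I) (I + 2) (I + 3)
    (fun h => absurd (hfresh _ h) (by omega)) (fun h => absurd (hfresh _ h) (by omega)) (by omega),
    factStep.mk (I + 2) _, ?_⟩
  have htail : (encTail I).map (substAtm (I + 2) (.const c')) = encTail I :=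
    substGoal_of_not_mem _ fun h => absurd (mem_goalVars_encTail h).2 (by omega)
  have hsteps : substGoal (I + 2) (.const c')
      (Atm.sg (.var (I + 2)) (.var (I + 3)) :: Atm.parent (.var 1) (.var (I + 3)) :: encTail I) =
      renameGoal (stepRenaming I) (enc c' (I + 1)) := by
    rw [renameGoal_stepRenaming_enc, substGoal, List.map_cons, List.map_cons, htail]
    simp [substAtm, substTm]
  rw [hsteps, normGoal_renameGoal (injOn_stepRenaming c' I)]

end Counting13
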